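/- Let L, T > 0, Ω = (-L/2, L/2) × (0, T), Λ ≥ 1, and let μ be a finite nonnegative Borel measure on [1, Λ]. Let (v_n) be a sequence of positive real numbers with v_n → v̄ > 0, and let (g_n) be a sequence in L²(Ω; ℝ) converging weakly in L²(Ω) to g (i.e. ∫_Ω g_n h → ∫_Ω g h for every h ∈ L²(Ω)). Then ∫_{[1,Λ]} |T_{g_n}(v_n, λ)|² dμ(λ) → ∫_{[1,Λ]} |T_g(v̄, λ)|² dμ(λ) as n → ∞. -/

import Mathlib

/-!
A weakly convergent sequence in `L²(Ω)` is bounded (Banach–Steinhaus), hence bounded in `L¹(Ω)`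
since `Ω` has finite measure. For fixed `λ`, the kernels `e^{-λ² v z - i λ v x}` converge
uniformly on the compact closure of `Ω` as `v_n → v̄`; with the `L¹` bound this reduces
`T_{g_n}(v_n, λ)` to `T_{g_n}(v̄, λ)`, which converges to `T_g(v̄, λ)` by testing the weak
convergence against the real and imaginary parts of the kernel. Finally
`|T_{g_n}(v_n, λ)| ≤ sup_n ‖g_n‖_{L¹}`, so dominated convergence in `λ` concludes.
-/

open MeasureTheory Complex Set Filter Topology

noncomputable def michellTransform (L T v lam : ℝ) (g : ℝ × ℝ → ℝ) : ℂ :=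
  ∫ p in (Ioo (-L/2) (L/2)) ×ˢ (Ioo (0:ℝ) T),
    (g p : ℂ) * Complex.exp (-(lam^2 * v * p.2 : ℝ)) *
      Complex.exp (-(Complex.I * lam * v * p.1))

section WeakConvergence

variable {α : Type*} [MeasurableSpace α] {μ : Measure α} {g : ℕ → α → ℝ} {glim : α → ℝ}

lemma integral_norm_le_eLpNorm_two_mul {E : Type*} [NormedAddCommGroup E] [IsFiniteMeasure μ]
    {f : α → E} (hf : MemLp f 2 μ) :
    ∫ x, ‖f x‖ ∂μ ≤ (eLpNorm f 2 μ).toReal * (μ univ).toReal ^ (1/2 : ℝ) := by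
  have h := eLpNorm_le_eLpNorm_mul_rpow_measure_univ one_le_two hf.1
  norm_num at h
  rw [integral_norm_eq_lintegral_enorm hf.1, ← eLpNorm_one_eq_lintegral_enorm,
    ENNReal.toReal_rpow, ← ENNReal.toReal_mul]
  exact ENNReal.toReal_mono (ENNReal.mul_ne_top hf.eLpNorm_ne_top (by finiteness))
    (by simpa using h)

lemma exists_eLpNorm_two_le_of_forall_tendsto (hg : ∀ n, MemLp (g n) 2 μ)
    (hweak : ∀ h, MemLp h 2 μ → ∃ c, Tendsto (fun n => ∫ x, g n x * h x ∂μ) atTop (𝓝 c)) :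
    ∃ M, ∀ n, (eLpNorm (g n) 2 μ).toReal ≤ M := by
  have hbdd : ∀ h : Lp ℝ 2 μ, ∃ C, ∀ n, ‖innerSL ℝ ((hg n).toLp (g n)) h‖ ≤ C := by
    intro h
    obtain ⟨c, hc⟩ := hweak h (Lp.memLp h)
    obtain ⟨C, hC⟩ := hc.norm.bddAbove_range
    refine ⟨C, fun n => le_of_eq_of_le ?_ (hC ⟨n, rfl⟩)⟩
    rw [innerSL_apply_apply, L2.inner_def]
    congr 1
    refine integral_congr_ae ?_
    filter_upwards [(hg n).coeFn_toLp] with x hx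
    simp [hx, mul_comm]
  obtain ⟨M, hM⟩ := banach_steinhaus hbdd
  exact ⟨M, fun n => by simpa [innerSL_apply_norm, Lp.norm_toLp] using hM n⟩

lemma exists_integral_norm_le_of_forall_tendsto [IsFiniteMeasure μ] (hg : ∀ n, MemLp (g n) 2 μ)
    (hweak : ∀ h, MemLp h 2 μ → ∃ c, Tendsto (fun n => ∫ x, g n x * h x ∂μ) atTop (𝓝 c)) :
    ∃ M, ∀ n, ∫ x, ‖g n x‖ ∂μ ≤ M := by
  obtain ⟨M, hM⟩ := exists_eLpNorm_two_le_of_forall_tendsto hg hweak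
  exact ⟨M * (μ univ).toReal ^ (1/2 : ℝ), fun n =>
    (integral_norm_le_eLpNorm_two_mul (hg n)).trans (by gcongr; exact hM n)⟩

lemma integral_ofReal_mul_eq_re_add_im {f : α → ℝ} {k : α → ℂ}
    (hfk : Integrable (fun x => (f x : ℂ) * k x) μ) :
    ∫ x, (f x : ℂ) * k x ∂μ = ↑(∫ x, f x * (k x).re ∂μ) + ↑(∫ x, f x * (k x).im ∂μ) * I := by
  simpa using (integral_re_add_im hfk).symm

lemma tendsto_integral_ofReal_mul_of_weak (hg : ∀ n, MemLp (g n) 2 μ) (hglim : MemLp glim 2 μ)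
    (hweak : ∀ h, MemLp h 2 μ →
      Tendsto (fun n => ∫ x, g n x * h x ∂μ) atTop (𝓝 (∫ x, glim x * h x ∂μ)))
    {k : α → ℂ} (hk : MemLp k 2 μ) :
    Tendsto (fun n => ∫ x, (g n x : ℂ) * k x ∂μ) atTop (𝓝 (∫ x, (glim x : ℂ) * k x ∂μ)) := by
  have hint : ∀ {f : α → ℝ}, MemLp f 2 μ → Integrable (fun x => (f x : ℂ) * k x) μ :=
    fun hf => hf.ofReal.integrable_mul hk
  simp_rw [integral_ofReal_mul_eq_re_add_im (hint (hg _)),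
    integral_ofReal_mul_eq_re_add_im (hint hglim)]
  exact ((continuous_ofReal.tendsto _).comp (hweak _ hk.re)).add
    (((continuous_ofReal.tendsto _).comp (hweak _ hk.im)).mul_const I)

lemma tendsto_integral_mul_sub_of_tendstoUniformlyOn {G : ℕ → α → ℂ} {M : ℝ}
    (hG : ∀ n, Integrable (G n) μ) (hM : ∀ n, ∫ x, ‖G n x‖ ∂μ ≤ M)
    {K : ℕ → α → ℂ} {k : α → ℂ} {s : Set α} (hKk : TendstoUniformlyOn K k atTop s)
    (hs : ∀ᵐ x ∂μ, x ∈ s) :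
    Tendsto (fun n => ∫ x, G n x * (K n x - k x) ∂μ) atTop (𝓝 0) := by
  rw [Metric.tendsto_nhds]
  intro ε hε
  have hM1 : 0 < M + 1 := by linarith [(integral_nonneg fun x => norm_nonneg (G 0 x)).trans (hM 0)]
  filter_upwards [Metric.tendstoUniformlyOn_iff.1 hKk (ε / (M + 1)) (by positivity)] with n hn
  rw [dist_zero_right]
  calc ‖∫ x, G n x * (K n x - k x) ∂μ‖ ≤ ∫ x, ‖G n x‖ * (ε / (M + 1)) ∂μ := by
        refine norm_integral_le_of_norm_le ((hG n).norm.mul_const _) ?_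
        filter_upwards [hs] with x hx
        rw [norm_mul, ← dist_eq_norm']
        exact mul_le_mul_of_nonneg_left (hn x hx).le (norm_nonneg _)
    _ ≤ M * (ε / (M + 1)) := by rw [integral_mul_const]; gcongr; exact hM n
    _ < ε := by rw [mul_div_assoc', div_lt_iff₀ hM1]; nlinarith

lemma tendsto_integral_ofReal_mul_of_weak_of_tendstoUniformlyOn [IsFiniteMeasure μ]
    (hg : ∀ n, MemLp (g n) 2 μ) (hglim : MemLp glim 2 μ)
    (hweak : ∀ h, MemLp h 2 μ →
      Tendsto (fun n => ∫ x, g n x * h x ∂μ) atTop (𝓝 (∫ x, glim x * h x ∂μ)))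
    {K : ℕ → α → ℂ} {k : α → ℂ} (hK : ∀ n, MemLp (K n) 2 μ) (hk : MemLp k 2 μ) {s : Set α}
    (hKk : TendstoUniformlyOn K k atTop s) (hs : ∀ᵐ x ∂μ, x ∈ s) :
    Tendsto (fun n => ∫ x, (g n x : ℂ) * K n x ∂μ) atTop (𝓝 (∫ x, (glim x : ℂ) * k x ∂μ)) := by
  obtain ⟨M, hM⟩ := exists_integral_norm_le_of_forall_tendsto hg fun h hh => ⟨_, hweak h hh⟩
  have hsplit : ∀ n, ∫ x, (g n x : ℂ) * K n x ∂μ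
      = ∫ x, (g n x : ℂ) * (K n x - k x) ∂μ + ∫ x, (g n x : ℂ) * k x ∂μ := by
    intro n
    have hdiff : Integrable (fun x => (g n x : ℂ) * (K n x - k x)) μ :=
      (hg n).ofReal.integrable_mul ((hK n).sub hk)
    have hlim : Integrable (fun x => (g n x : ℂ) * k x) μ := (hg n).ofReal.integrable_mul hk
    rw [← integral_add hdiff hlim]
    simp_rw [mul_sub, sub_add_cancel]
  simp_rw [hsplit]
  simpa using (tendsto_integral_mul_sub_of_tendstoUniformlyOn
    (fun n => ((hg n).integrable one_le_two).ofReal) (by simpa using hM) hKk hs).add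
    (tendsto_integral_ofReal_mul_of_weak hg hglim hweak hk)

end WeakConvergence

lemma IsCompact.tendstoUniformlyOn_comp_of_continuous {ι α β γ : Type*} [TopologicalSpace α]
    [TopologicalSpace β] [UniformSpace γ] {F : α → β → γ} {V : Set β} (hV : IsCompact V)
    (hF : Continuous ↿F) {l : Filter ι} {u : ι → α} {x : α} (hu : Tendsto u l (𝓝 x)) :
    TendstoUniformlyOn (fun i => F (u i)) (F x) l V := by
  intro w hw
  obtain ⟨t, ht, htw⟩ := hV.mem_uniformity_of_prod hF.continuousOn (mem_univ x)
    (symm_le_uniformity hw)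
  rw [nhdsWithin_univ] at ht
  filter_upwards [hu ht] with i hi y hy using htw _ hi y hy

-- Reducible, so that the hypotheses of `stmt4`, stated on `Ioo _ _ ×ˢ Ioo _ _`, apply as they are.
abbrev michellRect (L T : ℝ) : Set (ℝ × ℝ) := Ioo (-L/2) (L/2) ×ˢ Ioo 0 T

noncomputable def michellKernel (v lam : ℝ) (p : ℝ × ℝ) : ℂ :=
  exp (-(lam^2 * v * p.2 : ℝ)) * exp (-(I * lam * v * p.1))

@[fun_prop]
lemma Continuous.michellKernel {X : Type*} [TopologicalSpace X] {v lam : X → ℝ}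
    {p : X → ℝ × ℝ} (hv : Continuous v) (hlam : Continuous lam) (hp : Continuous p) :
    Continuous fun x => michellKernel (v x) (lam x) (p x) := by
  unfold _root_.michellKernel; fun_prop

lemma norm_michellKernel_le_one {v : ℝ} (lam : ℝ) {p : ℝ × ℝ} (hv : 0 ≤ v) (hp : 0 ≤ p.2) :
    ‖michellKernel v lam p‖ ≤ 1 := by
  have hphase : -(I * lam * v * p.1) = ((-(lam * v * p.1) : ℝ) : ℂ) * I := by push_cast; ring
  rw [michellKernel, hphase, norm_mul, norm_exp_ofReal_mul_I, ← ofReal_neg, norm_exp_ofReal,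
    mul_one, Real.exp_le_one_iff, neg_nonpos]
  positivity

namespace michellRect

variable {L T : ℝ}

lemma measurableSet : MeasurableSet (michellRect L T) :=
  measurableSet_Ioo.prod measurableSet_Ioo

instance : IsFiniteMeasure (volume.restrict (michellRect L T)) := by
  rw [michellRect, Measure.volume_eq_prod, ← Measure.prod_restrict]
  infer_instance

lemma subset_Icc_prod_Icc : michellRect L T ⊆ Icc (-L/2) (L/2) ×ˢ Icc 0 T :=
  prod_mono Ioo_subset_Icc_self Ioo_subset_Icc_self

end michellRect

section Transform

variable {L T : ℝ}

lemma michellTransform_eq_integral_michellKernel (v lam : ℝ) (g : ℝ × ℝ → ℝ) :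
    michellTransform L T v lam g = ∫ p in michellRect L T, (g p : ℂ) * michellKernel v lam p := by
  simp only [michellTransform, michellKernel, michellRect, mul_assoc]

lemma ae_norm_michellKernel_le_one {v : ℝ} (hv : 0 ≤ v) (lam : ℝ) :
    ∀ᵐ p ∂volume.restrict (michellRect L T), ‖michellKernel v lam p‖ ≤ 1 :=
  (ae_restrict_mem michellRect.measurableSet).mono fun _ hp =>
    norm_michellKernel_le_one lam hv hp.2.1.le

lemma memLp_michellKernel {v : ℝ} (hv : 0 ≤ v) (lam : ℝ) (q : ENNReal) :
    MemLp (michellKernel v lam) q (volume.restrict (michellRect L T)) :=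
  MemLp.of_bound (by fun_prop : Continuous (michellKernel v lam)).aestronglyMeasurable 1
    (ae_norm_michellKernel_le_one hv lam)

lemma norm_michellTransform_le {v : ℝ} (hv : 0 ≤ v) (lam : ℝ) {g : ℝ × ℝ → ℝ}
    (hg : IntegrableOn g (michellRect L T)) :
    ‖michellTransform L T v lam g‖ ≤ ∫ p in michellRect L T, ‖g p‖ := by
  rw [michellTransform_eq_integral_michellKernel]
  refine norm_integral_le_of_norm_le hg.norm ?_
  filter_upwards [ae_norm_michellKernel_le_one hv lam] with p hp
  rw [norm_mul, norm_real]
  exact mul_le_of_le_one_right (norm_nonneg _) hp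

lemma continuous_michellTransform {v : ℝ} (hv : 0 ≤ v) {g : ℝ × ℝ → ℝ}
    (hg : IntegrableOn g (michellRect L T)) :
    Continuous fun lam => michellTransform L T v lam g := by
  simp_rw [michellTransform_eq_integral_michellKernel]
  refine continuous_of_dominated (fun lam => ?_) (fun lam => ?_) hg.norm
    (ae_of_all _ fun p => by fun_prop)
  · exact hg.ofReal.aestronglyMeasurable.mul
      (by fun_prop : Continuous (michellKernel v lam)).aestronglyMeasurable
  · filter_upwards [ae_norm_michellKernel_le_one hv lam] with p hp
    rw [norm_mul, norm_real]
    exact mul_le_of_le_one_right (norm_nonneg _) hp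

lemma tendsto_michellTransform {v : ℕ → ℝ} {vbar : ℝ} (hv : ∀ n, 0 ≤ v n) (hvbar : 0 ≤ vbar)
    (hvconv : Tendsto v atTop (𝓝 vbar)) {g : ℕ → ℝ × ℝ → ℝ} {glim : ℝ × ℝ → ℝ}
    (hg : ∀ n, MemLp (g n) 2 (volume.restrict (michellRect L T)))
    (hglim : MemLp glim 2 (volume.restrict (michellRect L T)))
    (hweak : ∀ h, MemLp h 2 (volume.restrict (michellRect L T)) →
      Tendsto (fun n => ∫ p in michellRect L T, g n p * h p) atTop
        (𝓝 (∫ p in michellRect L T, glim p * h p)))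
    (lam : ℝ) :
    Tendsto (fun n => michellTransform L T (v n) lam (g n)) atTop
      (𝓝 (michellTransform L T vbar lam glim)) := by
  simp_rw [michellTransform_eq_integral_michellKernel]
  exact tendsto_integral_ofReal_mul_of_weak_of_tendstoUniformlyOn hg hglim hweak
    (fun n => memLp_michellKernel (hv n) lam 2) (memLp_michellKernel hvbar lam 2)
    ((isCompact_Icc.prod isCompact_Icc).tendstoUniformlyOn_comp_of_continuous
      (F := fun w => michellKernel w lam) (by fun_prop) hvconv)
    ((ae_restrict_mem michellRect.measurableSet).mono fun _ hp =>
      michellRect.subset_Icc_prod_Icc hp)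

end Transform

theorem stmt4_general (L T Λ : ℝ)
    (μ : Measure ℝ) [IsFiniteMeasure μ]
    (v : ℕ → ℝ) (vbar : ℝ) (hv : ∀ n, 0 < v n) (hvbar : 0 < vbar)
    (hvconv : Tendsto v atTop (nhds vbar))
    (g : ℕ → ℝ × ℝ → ℝ) (glim : ℝ × ℝ → ℝ)
    (hg : ∀ n, MemLp (g n) 2 (volume.restrict ((Ioo (-L/2) (L/2)) ×ˢ (Ioo (0:ℝ) T))))
    (hglim : MemLp glim 2 (volume.restrict ((Ioo (-L/2) (L/2)) ×ˢ (Ioo (0:ℝ) T))))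
    (hweak : ∀ h : ℝ × ℝ → ℝ,
      MemLp h 2 (volume.restrict ((Ioo (-L/2) (L/2)) ×ˢ (Ioo (0:ℝ) T))) →
      Tendsto (fun n => ∫ p in (Ioo (-L/2) (L/2)) ×ˢ (Ioo (0:ℝ) T), g n p * h p)
        atTop (nhds (∫ p in (Ioo (-L/2) (L/2)) ×ˢ (Ioo (0:ℝ) T), glim p * h p))) :
    Tendsto
      (fun n => ∫ lam in Icc 1 Λ,
        ‖michellTransform L T (v n) lam (g n)‖ ^ 2 ∂μ)
      atTop
      (nhds (∫ lam in Icc 1 Λ,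
        ‖michellTransform L T vbar lam glim‖ ^ 2 ∂μ)) := by
  have hv0 : ∀ n, 0 ≤ v n := fun n => (hv n).le
  have hgint : ∀ n, IntegrableOn (g n) (michellRect L T) := fun n => (hg n).integrable one_le_two
  obtain ⟨M, hM⟩ := exists_integral_norm_le_of_forall_tendsto hg fun h hh => ⟨_, hweak h hh⟩
  have hbound : ∀ n lam, ‖michellTransform L T (v n) lam (g n)‖ ≤ M := fun n lam =>
    (norm_michellTransform_le (hv0 n) lam (hgint n)).trans (hM n)
  refine tendsto_integral_of_dominated_convergence (fun _ => M ^ 2)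
    (fun n => ((continuous_michellTransform (hv0 n) (hgint n)).norm.pow 2).aestronglyMeasurable)
    (integrable_const _) (fun n => ae_of_all _ fun lam => ?_)
    (ae_of_all _ fun lam =>
      (tendsto_michellTransform hv0 hvbar.le hvconv hg hglim hweak lam).norm.pow 2)
  rw [norm_pow, norm_norm]
  exact pow_le_pow_left₀ (norm_nonneg _) (hbound n lam) 2

theorem stmt4 (L T Λ : ℝ) (hL : 0 < L) (hT : 0 < T) (hΛ : 1 ≤ Λ)
    (μ : Measure ℝ) [IsFiniteMeasure μ]
    (v : ℕ → ℝ) (vbar : ℝ) (hv : ∀ n, 0 < v n) (hvbar : 0 < vbar)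
    (hvconv : Tendsto v atTop (nhds vbar))
    (g : ℕ → ℝ × ℝ → ℝ) (glim : ℝ × ℝ → ℝ)
    (hg : ∀ n, MemLp (g n) 2 (volume.restrict ((Ioo (-L/2) (L/2)) ×ˢ (Ioo (0:ℝ) T))))
    (hglim : MemLp glim 2 (volume.restrict ((Ioo (-L/2) (L/2)) ×ˢ (Ioo (0:ℝ) T))))
    (hweak : ∀ h : ℝ × ℝ → ℝ,
      MemLp h 2 (volume.restrict ((Ioo (-L/2) (L/2)) ×ˢ (Ioo (0:ℝ) T))) →
      Tendsto (fun n => ∫ p in (Ioo (-L/2) (L/2)) ×ˢ (Ioo (0:ℝ) T), g n p * h p)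
        atTop (nhds (∫ p in (Ioo (-L/2) (L/2)) ×ˢ (Ioo (0:ℝ) T), glim p * h p))) :
    Tendsto
      (fun n => ∫ lam in Icc 1 Λ,
        ‖michellTransform L T (v n) lam (g n)‖ ^ 2 ∂μ)
      atTop
      (nhds (∫ lam in Icc 1 Λ,
        ‖michellTransform L T vbar lam glim‖ ^ 2 ∂μ)) :=
  stmt4_general L T Λ μ v vbar hv hvbar hvconv g glim hg hglim hweak
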